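/- For any nonzero octonion x, the right multiplication map Rₓ : 𝕆 → 𝕆, y ↦ yx, viewed as an ℝ-linear map on ℝ⁸, has determinant ‖x‖⁸. -/

import Mathlib

noncomputable section
open scoped Quaternion RealInnerProductSpace

/-- Octonions, realized via the Cayley–Dickson construction from the quaternions. -/
abbrev Oct : Type := ℍ[ℝ] × ℍ[ℝ]

/-- Cayley–Dickson multiplication on the octonions. -/
def omul (x y : Oct) : Oct :=
  (x.1 * y.1 - star y.2 * x.2, x.2 * star y.1 + y.2 * x.1)

/-- Octonion conjugation. -/
def oconj (x : Oct) : Oct := (star x.1, -x.2)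

lemma omul_add (x y z : Oct) : omul x (y + z) = omul x y + omul x z := by
  simp [omul, Prod.ext_iff, mul_add, add_mul, star_add]; constructor <;> abel

lemma add_omul (x y z : Oct) : omul (x + y) z = omul x z + omul y z := by
  simp [omul, Prod.ext_iff, mul_add, add_mul, star_add]; constructor <;> abel

lemma omul_smul (c : ℝ) (x y : Oct) : omul x (c • y) = c • omul x y := by
  simp [omul, Prod.ext_iff, star_smul, mul_smul_comm, smul_mul_assoc, smul_sub, smul_add]

lemma smul_omul (c : ℝ) (x y : Oct) : omul (c • x) y = c • omul x y := by
  simp [omul, Prod.ext_iff, mul_smul_comm, smul_mul_assoc, smul_sub, smul_add]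

/-- Left multiplication by `x` on the octonions, as an `ℝ`-linear map. -/
def oL (x : Oct) : Oct →ₗ[ℝ] Oct where
  toFun y := omul x y
  map_add' y z := omul_add x y z
  map_smul' c y := omul_smul c x y

/-- Right multiplication by `x` on the octonions, as an `ℝ`-linear map. -/
def oR (x : Oct) : Oct →ₗ[ℝ] Oct where
  toFun y := omul y x
  map_add' y z := add_omul y z x
  map_smul' c y := smul_omul c y x

/-- Squared Euclidean norm of an octonion. -/
def onormSq (x : Oct) : ℝ := ‖x.1‖ ^ 2 + ‖x.2‖ ^ 2

/-- Euclidean norm of an octonion. -/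
def oNorm (x : Oct) : ℝ := Real.sqrt (onormSq x)

/-- Euclidean inner product of octonions. -/
def oInner (x y : Oct) : ℝ := ⟪x.1, y.1⟫ + ⟪x.2, y.2⟫

/- ### Auxiliary lemmas -/

lemma qinner (a b : ℍ[ℝ]) : ⟪a, b⟫ =
    a.re * b.re + a.imI * b.imI + a.imJ * b.imJ + a.imK * b.imK := by
  rw [Quaternion.inner_def, Quaternion.re_mul]
  simp only [Quaternion.re_star, Quaternion.imI_star, Quaternion.imJ_star, Quaternion.imK_star]
  ring

lemma qnormsq (a : ℍ[ℝ]) : ‖a‖ ^ 2 = a.re ^ 2 + a.imI ^ 2 + a.imJ ^ 2 + a.imK ^ 2 := by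
  rw [sq, ← Quaternion.normSq_eq_norm_mul_self, Quaternion.normSq_def']

lemma oInner_omul (x y z : Oct) :
    oInner (omul y x) (omul z x) = onormSq x * oInner y z := by
  obtain ⟨a, b⟩ := x; obtain ⟨c, d⟩ := y; obtain ⟨e, f⟩ := z
  simp only [oInner, omul, onormSq, qinner, qnormsq,
    Quaternion.re_sub, Quaternion.imI_sub, Quaternion.imJ_sub, Quaternion.imK_sub,
    Quaternion.re_add, Quaternion.imI_add, Quaternion.imJ_add, Quaternion.imK_add,
    Quaternion.re_mul, Quaternion.imI_mul, Quaternion.imJ_mul, Quaternion.imK_mul,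
    Quaternion.re_star, Quaternion.imI_star, Quaternion.imJ_star, Quaternion.imK_star]
  ring

lemma onormSq_nonneg (x : Oct) : 0 ≤ onormSq x :=
  add_nonneg (pow_nonneg (norm_nonneg _) 2) (pow_nonneg (norm_nonneg _) 2)

lemma onormSq_pos {x : Oct} (hx : x ≠ 0) : 0 < onormSq x := by
  have h : x.1 ≠ 0 ∨ x.2 ≠ 0 := by
    by_contra h; push_neg at h; exact hx (Prod.ext h.1 h.2)
  rw [onormSq]
  rcases h with h | h
  · nlinarith [norm_pos_iff.mpr h, sq_nonneg ‖x.2‖]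
  · nlinarith [norm_pos_iff.mpr h, sq_nonneg ‖x.1‖]

lemma finrank_oct : Module.finrank ℝ Oct = 8 := by
  rw [Module.finrank_prod, Quaternion.finrank_eq_four]

/-- Key squared-determinant identity. -/
lemma det_oR_sq (x : Oct) : LinearMap.det (oR x) ^ 2 = onormSq x ^ 8 := by
  set E := WithLp 2 (ℍ[ℝ] × ℍ[ℝ])
  let e : Oct ≃ₗ[ℝ] E := (WithLp.linearEquiv 2 ℝ (ℍ[ℝ] × ℍ[ℝ])).symm
  haveI : FiniteDimensional ℝ E := e.finiteDimensional
  let A : E →ₗ[ℝ] E := e.conj (oR x)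
  have hdet : LinearMap.det A = LinearMap.det (oR x) := LinearMap.det_conj (oR x) e
  have hEfinrank : Module.finrank ℝ E = 8 := by
    rw [← e.finrank_eq, finrank_oct]
  have hinner : ∀ y z : E, ⟪A y, A z⟫ = onormSq x * ⟪y, z⟫ := by
    intro y z
    have h1 : ∀ u v : Oct, ⟪e u, e v⟫ = oInner u v := fun u v => rfl
    have h2 : ∀ w : E, A w = e (omul (e.symm w) x) := fun w => rfl
    rw [h2, h2, h1, oInner_omul]
    congr 1
  have hadj : (LinearMap.adjoint A) ∘ₗ A = (onormSq x) • LinearMap.id := by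
    apply LinearMap.ext; intro y
    apply ext_inner_right ℝ; intro z
    rw [LinearMap.comp_apply, LinearMap.adjoint_inner_left, hinner]
    simp [real_inner_smul_left]
  have hdets : LinearMap.det (LinearMap.adjoint A) * LinearMap.det A = onormSq x ^ 8 := by
    rw [← LinearMap.det_comp, hadj, LinearMap.det_smul, hEfinrank, LinearMap.det_id, mul_one]
  have hadjdet : LinearMap.det (LinearMap.adjoint A) = LinearMap.det A := by
    let b := stdOrthonormalBasis ℝ E
    rw [← LinearMap.det_toMatrix b.toBasis, ← LinearMap.det_toMatrix b.toBasis,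
      LinearMap.toMatrix_adjoint, Matrix.det_conjTranspose, star_trivial]
  rw [← hdet, sq]
  nth_rewrite 1 [← hadjdet]
  exact hdets

/-- `oR` bundled as a linear map in `x`. -/
def oRlin : Oct →ₗ[ℝ] (Oct →ₗ[ℝ] Oct) where
  toFun := oR
  map_add' x x' := LinearMap.ext fun y => omul_add y x x'
  map_smul' c x := LinearMap.ext fun y => omul_smul c y x

/-- The octonion unit. -/
def oe : Oct := ((1 : ℍ[ℝ]), (0 : ℍ[ℝ]))

lemma oR_oe : oR oe = LinearMap.id := by
  apply LinearMap.ext; intro y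
  show omul y oe = y
  simp [omul, oe, Prod.ext_iff]

lemma continuous_det_oR : Continuous fun x : Oct => LinearMap.det (oR x) := by
  have h1 : Continuous fun x : Oct => LinearMap.toContinuousLinearMap (oRlin x) := by
    exact LinearMap.continuous_of_finiteDimensional
      ((LinearMap.toContinuousLinearMap : (Oct →ₗ[ℝ] Oct) ≃ₗ[ℝ] (Oct →L[ℝ] Oct)).toLinearMap.comp
        oRlin)
  have h2 := ContinuousLinearMap.continuous_det.comp h1
  have heq : (fun x : Oct => (LinearMap.toContinuousLinearMap (oRlin x)).det) =
      fun x : Oct => LinearMap.det (oR x) := by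
    funext x
    show LinearMap.det ((LinearMap.toContinuousLinearMap (oRlin x)) : Oct →ₗ[ℝ] Oct) = _
    congr 1
  exact heq ▸ h2

/-- For a nonzero octonion `x`, the right multiplication map `Rₓ : y ↦ yx`,
viewed as an `ℝ`-linear endomorphism of `𝕆 ≅ ℝ⁸`, has determinant `‖x‖⁸`. -/
theorem det_oR (x : Oct) (hx : x ≠ 0) : LinearMap.det (oR x) = oNorm x ^ 8 := by
  have hrank : (1 : Cardinal) < Module.rank ℝ Oct := by
    rw [← Module.finrank_eq_rank, finrank_oct]
    norm_num
  have hconn : IsConnected ({(0 : Oct)}ᶜ) :=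
    isConnected_compl_singleton_of_one_lt_rank hrank 0
  have hne : ∀ y : Oct, y ≠ 0 → LinearMap.det (oR y) ≠ 0 := by
    intro y hy h0
    have := det_oR_sq y
    rw [h0] at this
    have := (onormSq_pos hy)
    nlinarith [pow_pos (onormSq_pos hy) 8]
  have hpos : 0 < LinearMap.det (oR x) := by
    by_contra h
    push_neg at h
    have hxlt : LinearMap.det (oR x) < 0 := lt_of_le_of_ne h (hne x hx)
    have h1 : oe ∈ ({(0 : Oct)}ᶜ : Set Oct) := by simp [oe, Prod.ext_iff]
    have hxmem : x ∈ ({(0 : Oct)}ᶜ : Set Oct) := by simpa using hx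
    have hiv := hconn.isPreconnected.intermediate_value hxmem h1
      (continuous_det_oR.continuousOn)
    have h0mem : (0 : ℝ) ∈ Set.Icc (LinearMap.det (oR x)) (LinearMap.det (oR oe)) := by
      constructor
      · exact hxlt.le
      · rw [oR_oe, LinearMap.det_id]; norm_num
    obtain ⟨y, hy, hy0⟩ := hiv h0mem
    exact hne y (by simpa using hy) hy0
  have hsq := det_oR_sq x
  have hsqr : oNorm x ^ 2 = onormSq x := Real.sq_sqrt (onormSq_nonneg x)
  have hn8 : oNorm x ^ 8 = onormSq x ^ 4 := by
    calc oNorm x ^ 8 = (oNorm x ^ 2) ^ 4 := by ring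
      _ = onormSq x ^ 4 := by rw [hsqr]
  have hNnn : 0 ≤ oNorm x ^ 8 := pow_nonneg (Real.sqrt_nonneg _) 8
  have hsq2 : LinearMap.det (oR x) ^ 2 = (oNorm x ^ 8) ^ 2 := by
    rw [hsq, hn8]; ring
  have hfactor : (LinearMap.det (oR x) - oNorm x ^ 8) *
      (LinearMap.det (oR x) + oNorm x ^ 8) = 0 := by linear_combination hsq2
  have hsum : 0 < LinearMap.det (oR x) + oNorm x ^ 8 := by linarith
  rcases mul_eq_zero.mp hfactor with h | h
  · linarith
  · linarith
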